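/- (Best Approximation Theorem) Let {|ψ_l⟩} be an orthonormal sequence in a bicomplex Hilbert space M and α₀,…,αₙ bicomplex numbers. Then for every |ψ⟩ ∈ M, ‖|ψ⟩ − Σ_{l=0}^{n} α_l|ψ_l⟩‖ ≥ ‖|ψ⟩ − Σ_{l=0}^{n} ⟨ψ_l|ψ⟩|ψ_l⟩‖. -/

import Mathlib

/-- Bicomplex numbers `w = z₁ + z₂ i₂` with `z₁ z₂ ∈ ℂ(i₁)`. -/
@[ext] structure BC where
  re : ℂ
  im : ℂ

namespace BC

instance : Zero BC := ⟨⟨0, 0⟩⟩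
instance : One BC := ⟨⟨1, 0⟩⟩
instance : Add BC := ⟨fun s t => ⟨s.re + t.re, s.im + t.im⟩⟩
instance : Neg BC := ⟨fun s => ⟨-s.re, -s.im⟩⟩
instance : Mul BC := ⟨fun s t => ⟨s.re * t.re - s.im * t.im, s.re * t.im + s.im * t.re⟩⟩

@[simp] theorem zero_re : (0 : BC).re = 0 := rfl
@[simp] theorem zero_im : (0 : BC).im = 0 := rfl
@[simp] theorem one_re : (1 : BC).re = 1 := rfl
@[simp] theorem one_im : (1 : BC).im = 0 := rfl
@[simp] theorem add_re (s t : BC) : (s + t).re = s.re + t.re := rfl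
@[simp] theorem add_im (s t : BC) : (s + t).im = s.im + t.im := rfl
@[simp] theorem neg_re (s : BC) : (-s).re = -s.re := rfl
@[simp] theorem neg_im (s : BC) : (-s).im = -s.im := rfl
@[simp] theorem mul_re (s t : BC) : (s * t).re = s.re * t.re - s.im * t.im := rfl
@[simp] theorem mul_im (s t : BC) : (s * t).im = s.re * t.im + s.im * t.re := rfl

instance commRing : CommRing BC where
  add_assoc a b c := by ext <;> simp <;> ring
  zero_add a := by ext <;> simp
  add_zero a := by ext <;> simp
  add_comm a b := by ext <;> simp <;> ring
  left_distrib a b c := by ext <;> simp <;> ring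
  right_distrib a b c := by ext <;> simp <;> ring
  zero_mul a := by ext <;> simp
  mul_zero a := by ext <;> simp
  mul_assoc a b c := by ext <;> simp <;> ring
  one_mul a := by ext <;> simp
  mul_one a := by ext <;> simp
  neg_add_cancel a := by ext <;> simp
  mul_comm a b := by ext <;> simp <;> ring
  nsmul := nsmulRec
  zsmul := zsmulRec

/-- The imaginary unit `i₁`. -/
def i1 : BC := ⟨Complex.I, 0⟩
/-- The imaginary unit `i₂`. -/
def i2 : BC := ⟨0, 1⟩
/-- The hyperbolic unit `j = i₁ i₂`. -/
def jh : BC := i1 * i2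
/-- The idempotent `e₁ = (1 + j)/2`. -/
noncomputable def e1 : BC := ⟨1/2, Complex.I/2⟩
/-- The idempotent `e₂ = (1 - j)/2`. -/
noncomputable def e2 : BC := ⟨1/2, -(Complex.I/2)⟩
/-- The embedding of `ℂ(i₁)` into the bicomplex numbers. -/
def C1 (z : ℂ) : BC := ⟨z, 0⟩
/-- First idempotent component `ẑ₁ = z₁ - z₂ i₁`. -/
def P1 (w : BC) : ℂ := w.re - w.im * Complex.I
/-- Second idempotent component `ẑ₂ = z₁ + z₂ i₁`. -/
def P2 (w : BC) : ℂ := w.re + w.im * Complex.I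
/-- The Euclidean `ℝ⁴`-norm `|w| = √(|z₁|² + |z₂|²)`. -/
noncomputable def enorm (w : BC) : ℝ := Real.sqrt (‖w.re‖ ^ 2 + ‖w.im‖ ^ 2)
/-- The conjugation `w^{†₁} = z̄₁ + z̄₂ i₂`. -/
def dag1 (w : BC) : BC := ⟨starRingEnd ℂ w.re, starRingEnd ℂ w.im⟩
/-- The conjugation `w^{†₂} = z₁ - z₂ i₂`. -/
def dag2 (w : BC) : BC := ⟨w.re, -w.im⟩
/-- The conjugation `w^{†₃} = z̄₁ - z̄₂ i₂`. -/
def dag3 (w : BC) : BC := ⟨starRingEnd ℂ w.re, -(starRingEnd ℂ w.im)⟩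

end BC

/-- A bicomplex scalar product on a module over the bicomplex numbers. -/
structure BCInner (M : Type*) [AddCommGroup M] [Module BC M] where
  inner : M → M → BC
  add_right : ∀ ψ φ χ : M, inner ψ (φ + χ) = inner ψ φ + inner ψ χ
  smul_right : ∀ (s : BC) (ψ φ : M), inner ψ (s • φ) = s * inner ψ φ
  conj_symm : ∀ ψ φ : M, inner ψ φ = BC.dag3 (inner φ ψ)
  hyper_pos : ∀ ψ : M, (BC.P1 (inner ψ ψ)).im = 0 ∧ 0 ≤ (BC.P1 (inner ψ ψ)).re ∧
      (BC.P2 (inner ψ ψ)).im = 0 ∧ 0 ≤ (BC.P2 (inner ψ ψ)).re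
  definite : ∀ ψ : M, inner ψ ψ = 0 → ψ = 0

/-- The norm induced by a bicomplex scalar product:
`‖φ‖ = (1/√2) √((φ₁,φ₁)₁ + (φ₂,φ₂)₂) = |√((φ,φ))|`. -/
noncomputable def bnorm {M : Type*} [AddCommGroup M] [Module BC M] (S : BCInner M) (φ : M) : ℝ :=
  (1 / Real.sqrt 2) * Real.sqrt ((BC.P1 (S.inner φ φ)).re + (BC.P2 (S.inner φ φ)).re)

/-- Completeness of a bicomplex inner product space with respect to the induced norm. -/
def BCComplete {M : Type*} [AddCommGroup M] [Module BC M] (S : BCInner M) : Prop :=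
  ∀ f : ℕ → M, (∀ ε > 0, ∃ N : ℕ, ∀ m ≥ N, ∀ n ≥ N, bnorm S (f m - f n) < ε) →
    ∃ φ : M, Filter.Tendsto (fun n => bnorm S (f n - φ)) Filter.atTop (nhds 0)

/-- Separability: existence of a countable dense subset. -/
def BCSeparable {M : Type*} [AddCommGroup M] [Module BC M] (S : BCInner M) : Prop :=
  ∃ D : Set M, D.Countable ∧ ∀ φ : M, ∀ ε > 0, ∃ ψ ∈ D, bnorm S (φ - ψ) < ε


/-!
Let `β l = ⟨ψ_l|ψ⟩`. The residual `r = ψ - Σ β_l ψ_l` is orthogonal to every `ψ_l`, so for any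
coefficients `α` the vector `ψ - Σ α_l ψ_l = r + Σ (β_l - α_l) ψ_l` satisfies the bicomplex
Pythagorean identity `⟨ψ - Σ α_l ψ_l | ψ - Σ α_l ψ_l⟩ = ⟨r|r⟩ + Σ (β_l - α_l)^{†₃} (β_l - α_l)`.
The norm only sees the real part of the `ℂ(i₁)`-part of `⟨φ|φ⟩`, and that of `w^{†₃} w` is
`|z₁|² + |z₂|² ≥ 0`.
-/

namespace BC

theorem dag3_zero : dag3 0 = 0 := by
  ext <;> simp [dag3]

theorem dag3_add (s t : BC) : dag3 (s + t) = dag3 s + dag3 t := by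
  ext <;> simp [dag3, add_comm]

theorem dag3_mul (s t : BC) : dag3 (s * t) = dag3 s * dag3 t := by
  ext <;> simp [dag3, add_comm]

theorem re_sum {ι : Type*} (s : Finset ι) (f : ι → BC) :
    (∑ i ∈ s, f i).re = ∑ i ∈ s, (f i).re :=
  map_sum (AddMonoidHom.mk' re add_re) f s

theorem re_P1_add_re_P2 (w : BC) : (P1 w).re + (P2 w).re = 2 * w.re.re := by
  simp [P1, P2]
  ring

theorem re_re_dag3_mul_self (w : BC) : (dag3 w * w).re.re = ‖w.re‖ ^ 2 + ‖w.im‖ ^ 2 := by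
  simp [dag3, ← Complex.normSq_eq_norm_sq, Complex.normSq_apply]

theorem re_re_dag3_mul_self_nonneg (w : BC) : 0 ≤ (dag3 w * w).re.re := by
  rw [re_re_dag3_mul_self]
  positivity

end BC

namespace BCInner

variable {M : Type*} [AddCommGroup M] [Module BC M] (S : BCInner M)

def innerRight (φ : M) : M →ₗ[BC] BC where
  toFun := S.inner φ
  map_add' := S.add_right φ
  map_smul' s χ := S.smul_right s φ χ

theorem inner_sub_right (φ χ χ' : M) : S.inner φ (χ - χ') = S.inner φ χ - S.inner φ χ' :=
  map_sub (S.innerRight φ) χ χ'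

theorem inner_sum_right {ι : Type*} (φ : M) (s : Finset ι) (f : ι → M) :
    S.inner φ (∑ i ∈ s, f i) = ∑ i ∈ s, S.inner φ (f i) :=
  map_sum (S.innerRight φ) f s

theorem inner_add_left (φ φ' χ : M) : S.inner (φ + φ') χ = S.inner φ χ + S.inner φ' χ := by
  rw [S.conj_symm, S.add_right, BC.dag3_add, ← S.conj_symm, ← S.conj_symm]

theorem inner_smul_left (s : BC) (φ χ : M) : S.inner (s • φ) χ = BC.dag3 s * S.inner φ χ := by
  rw [S.conj_symm, S.smul_right, BC.dag3_mul, ← S.conj_symm]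

theorem inner_sum_left {ι : Type*} (χ : M) (s : Finset ι) (f : ι → M) :
    S.inner (∑ i ∈ s, f i) χ = ∑ i ∈ s, S.inner (f i) χ :=
  map_sum (AddMonoidHom.mk' (S.inner · χ) (S.inner_add_left · · χ)) f s

theorem inner_eq_zero_symm {φ χ : M} (h : S.inner φ χ = 0) : S.inner χ φ = 0 := by
  rw [S.conj_symm, h, BC.dag3_zero]

theorem inner_add_add_self_of_inner_eq_zero {φ χ : M} (h : S.inner φ χ = 0) :
    S.inner (φ + χ) (φ + χ) = S.inner φ φ + S.inner χ χ := by
  rw [S.inner_add_left, S.add_right, S.add_right, h, S.inner_eq_zero_symm h]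
  ring

def Orthonormal {ι : Type*} [DecidableEq ι] (v : ι → M) : Prop :=
  ∀ l m, S.inner (v l) (v m) = if l = m then 1 else 0

section Orthonormal

variable {S} {ι : Type*} [DecidableEq ι] {v : ι → M} (hv : S.Orthonormal v) (s : Finset ι)
include hv

theorem Orthonormal.inner_sum_smul_right (c : ι → BC) {l : ι} (hl : l ∈ s) :
    S.inner (v l) (∑ m ∈ s, c m • v m) = c l := by
  simp [S.inner_sum_right, S.smul_right, hv l, hl]

theorem Orthonormal.inner_sum_smul_self (c : ι → BC) :
    S.inner (∑ l ∈ s, c l • v l) (∑ l ∈ s, c l • v l) = ∑ l ∈ s, BC.dag3 (c l) * c l := by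
  rw [S.inner_sum_left]
  refine Finset.sum_congr rfl fun l hl => ?_
  rw [S.inner_smul_left, hv.inner_sum_smul_right s c hl]

theorem Orthonormal.inner_sub_sum_inner_smul_eq_zero (ψ : M) {l : ι} (hl : l ∈ s) :
    S.inner (v l) (ψ - ∑ m ∈ s, S.inner (v m) ψ • v m) = 0 := by
  rw [S.inner_sub_right, hv.inner_sum_smul_right s _ hl, sub_self]

theorem Orthonormal.inner_sum_smul_sub_sum_inner_smul_eq_zero (ψ : M) (c : ι → BC) :
    S.inner (∑ l ∈ s, c l • v l) (ψ - ∑ m ∈ s, S.inner (v m) ψ • v m) = 0 := by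
  rw [S.inner_sum_left]
  refine Finset.sum_eq_zero fun l hl => ?_
  rw [S.inner_smul_left, hv.inner_sub_sum_inner_smul_eq_zero s ψ hl, mul_zero]

theorem Orthonormal.inner_self_sub_sum_smul (ψ : M) (α : ι → BC) :
    S.inner (ψ - ∑ l ∈ s, α l • v l) (ψ - ∑ l ∈ s, α l • v l) =
      S.inner (ψ - ∑ l ∈ s, S.inner (v l) ψ • v l) (ψ - ∑ l ∈ s, S.inner (v l) ψ • v l) +
        ∑ l ∈ s, BC.dag3 (S.inner (v l) ψ - α l) * (S.inner (v l) ψ - α l) := by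
  have hdecomp : ψ - ∑ l ∈ s, α l • v l = (ψ - ∑ l ∈ s, S.inner (v l) ψ • v l) +
      ∑ l ∈ s, (S.inner (v l) ψ - α l) • v l := by
    simp only [sub_smul, Finset.sum_sub_distrib]
    abel
  rw [hdecomp, S.inner_add_add_self_of_inner_eq_zero
    (S.inner_eq_zero_symm (hv.inner_sum_smul_sub_sum_inner_smul_eq_zero s ψ _)),
    hv.inner_sum_smul_self]

end Orthonormal

end BCInner

theorem bnorm_eq_re_re {M : Type*} [AddCommGroup M] [Module BC M] (S : BCInner M) (φ : M) :
    bnorm S φ = (1 / Real.sqrt 2) * Real.sqrt (2 * (S.inner φ φ).re.re) := by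
  rw [bnorm, BC.re_P1_add_re_P2]

theorem bnorm_le_bnorm_of_re_re_inner_self_le {M : Type*} [AddCommGroup M] [Module BC M]
    (S : BCInner M) {φ χ : M} (h : (S.inner φ φ).re.re ≤ (S.inner χ χ).re.re) :
    bnorm S φ ≤ bnorm S χ := by
  rw [bnorm_eq_re_re, bnorm_eq_re_re]
  gcongr

theorem bicomplex_best_approximation_general {M : Type*} [AddCommGroup M] [Module BC M]
    (S : BCInner M)
    (ψseq : ℕ → M)
    (horth : ∀ l m : ℕ, S.inner (ψseq l) (ψseq m) = if l = m then 1 else 0)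
    (n : ℕ) (α : ℕ → BC) (ψ : M) :
    bnorm S (ψ - ∑ l ∈ Finset.range (n + 1), α l • ψseq l) ≥
      bnorm S (ψ - ∑ l ∈ Finset.range (n + 1), S.inner (ψseq l) ψ • ψseq l) := by
  have hv : S.Orthonormal ψseq := horth
  apply bnorm_le_bnorm_of_re_re_inner_self_le
  rw [hv.inner_self_sub_sum_smul _ ψ α, BC.add_re, Complex.add_re, BC.re_sum, Complex.re_sum]
  exact le_add_of_nonneg_right
    (Finset.sum_nonneg fun l _ => BC.re_re_dag3_mul_self_nonneg _)

/-- Best Approximation Theorem: for an orthonormal sequence `{ψ_l}` in a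
bicomplex Hilbert space and any bicomplex scalars `α₀, …, αₙ`,
`‖ψ - Σ α_l ψ_l‖ ≥ ‖ψ - Σ ⟨ψ_l|ψ⟩ ψ_l‖`. -/
theorem bicomplex_best_approximation {M : Type*} [AddCommGroup M] [Module BC M]
    (S : BCInner M) (hcomplete : BCComplete S)
    (ψseq : ℕ → M)
    (horth : ∀ l m : ℕ, S.inner (ψseq l) (ψseq m) = if l = m then 1 else 0)
    (n : ℕ) (α : ℕ → BC) (ψ : M) :
    bnorm S (ψ - ∑ l ∈ Finset.range (n + 1), α l • ψseq l) ≥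
      bnorm S (ψ - ∑ l ∈ Finset.range (n + 1), S.inner (ψseq l) ψ • ψseq l) :=
  bicomplex_best_approximation_general S ψseq horth n α ψ
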